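/- arXiv:2512.02725 — 5 statements merged into one kernel-verified Lean document; each statement's English description precedes it below -/
import Mathlib

section
/- Let F be a subfield of ℝ that is really closed, i.e., whenever n ≥ 1, a₀, …, a_{n−1} ∈ F are nonzero, b₀, …, b_{n−1} ∈ F are pairwise distinct, x ∈ ℝ is positive, and Σ_{i<n} a_i · x^{b_i} = 0 (real power x^{b_i} for x > 0), then x ∈ F. If F is a proper subfield of ℝ (there exists x ∈ ℝ \ F), then the transcendence degree of ℝ over F equals the cardinality of the continuum 2^{ℵ₀}. -/
open scoped Real

/-- A subfield `F` of `ℝ` is *really closed* if whenever `n ≥ 1`, the coefficients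
`a i ∈ F` are nonzero, the exponents `b i ∈ F` are pairwise distinct, `x > 0`, and
`∑ i, a i * x ^ (b i) = 0` (real power), then `x ∈ F`. -/
def IsReallyClosed (F : Subfield ℝ) : Prop :=
  ∀ n : ℕ, 1 ≤ n → ∀ a b : Fin n → ℝ,
    (∀ i, a i ∈ F) → (∀ i, b i ∈ F) → (∀ i, a i ≠ 0) →
    (∀ i j, i ≠ j → b i ≠ b j) →
    ∀ x : ℝ, 0 < x → (∑ i, a i * x ^ (b i)) = 0 → x ∈ F

/-- The transcendence degree of `ℝ` over a subfield `F`: the supremum of the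
cardinalities of subsets of `ℝ` that are algebraically independent over `F`. -/
noncomputable def trdegOver (F : Subfield ℝ) : Cardinal :=
  ⨆ s : {s : Set ℝ // AlgebraicIndependent F ((↑) : s → ℝ)}, Cardinal.mk s.1

/-! A polynomial relation over `F` among the powers `t ^ bᵢ` of a positive `t ∉ F` is a
generalized polynomial equation for `t` with coefficients in `F` and exponents the
`ℕ`-combinations of the `bᵢ`; when the `bᵢ ∈ F` are `ℚ`-linearly independent these exponents are
pairwise distinct, so `IsReallyClosed F` would force `t ∈ F`. Hence a `ℚ`-basis of `F` yields an
algebraically independent family. Finally `#ℝ ≤ #F ⊔ trdeg ⊔ ℵ₀`, so if the transcendence degree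
were below `𝔠` then `#F = 𝔠`, and a `ℚ`-basis of `F` would have cardinality `𝔠`. -/

universe u

open Cardinal MvPolynomial

theorem Algebra.cardinalMk_le_max_trdeg (K E : Type u) [Field K] [Field E] [Algebra K E] :
    #E ≤ #K ⊔ Algebra.trdeg K E ⊔ ℵ₀ := by
  obtain ⟨s, hs⟩ := exists_isTranscendenceBasis K E
  have := hs.isAlgebraic
  calc #E ≤ #(Algebra.adjoin K (Set.range ((↑) : s → E))) ⊔ ℵ₀ :=
        Algebra.IsAlgebraic.cardinalMk_le_max _ E
    _ = #(MvPolynomial s K) ⊔ ℵ₀ := by rw [hs.1.aevalEquiv.toEquiv.cardinal_eq]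
    _ ≤ #K ⊔ #s ⊔ ℵ₀ ⊔ ℵ₀ := by gcongr; exact MvPolynomial.cardinalMk_le_max
    _ = #K ⊔ Algebra.trdeg K E ⊔ ℵ₀ := by rw [hs.cardinalMk_eq_trdeg, sup_sup_distrib_right]; simp

theorem Real.rpow_linearCombination {ι : Type*} {t : ℝ} (ht : 0 < t) (b : ι → ℝ) (d : ι →₀ ℕ) :
    t ^ Finsupp.linearCombination ℕ b d = d.prod fun i n => (t ^ b i) ^ n := by
  simp only [Finsupp.linearCombination_apply, Finsupp.sum, Finsupp.prod, nsmul_eq_mul,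
    Real.rpow_sum_of_pos ht, mul_comm (d _ : ℝ), Real.rpow_mul_natCast ht.le]

theorem MvPolynomial.aeval_rpow {R ι : Type*} [CommSemiring R] [Algebra R ℝ] {t : ℝ} (ht : 0 < t)
    (b : ι → ℝ) (p : MvPolynomial ι R) :
    aeval (fun i => t ^ b i) p =
      ∑ d ∈ p.support, algebraMap R ℝ (coeff d p) * t ^ Finsupp.linearCombination ℕ b d := by
  simp only [aeval_def, eval₂_eq, Real.rpow_linearCombination ht, Finsupp.prod]

theorem Subfield.exists_pos_notMem {F : Subfield ℝ} (h : ∃ x, x ∉ F) : ∃ t, 0 < t ∧ t ∉ F := by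
  obtain ⟨x, hx⟩ := h
  refine ⟨|x|, abs_pos.2 fun h => hx (h ▸ F.zero_mem), fun h => hx ?_⟩
  rcases abs_choice x with hx' | hx'
  · rwa [hx'] at h
  · simpa [hx'] using F.neg_mem h

namespace IsReallyClosed

variable {F : Subfield ℝ}

theorem mem_of_sum_rpow_eq_zero (hF : IsReallyClosed F) {ι : Type*} {s : Finset ι}
    (hs : s.Nonempty) {a b : ι → ℝ} (haF : ∀ i ∈ s, a i ∈ F) (hbF : ∀ i ∈ s, b i ∈ F)
    (ha : ∀ i ∈ s, a i ≠ 0) (hb : Set.InjOn b s) {x : ℝ} (hx : 0 < x)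
    (h : ∑ i ∈ s, a i * x ^ b i = 0) : x ∈ F := by
  let e := s.equivFin.symm
  refine hF s.card hs.card_pos (fun k => a (e k)) (fun k => b (e k)) (fun k => haF _ (e k).2)
    (fun k => hbF _ (e k).2) (fun k => ha _ (e k).2)
    (fun k l hkl hb' => hkl (e.injective (Subtype.ext (hb (e k).2 (e l).2 hb')))) x hx ?_
  rw [← h, ← s.sum_coe_sort]
  exact e.sum_comp fun i : s => a i * x ^ b i

theorem algebraicIndependent_rpow (hF : IsReallyClosed F) {t : ℝ} (ht : 0 < t) (htF : t ∉ F)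
    {ι : Type*} {b : ι → ℝ} (hbF : ∀ i, b i ∈ F) (hb : LinearIndependent ℚ b) :
    AlgebraicIndependent F fun i => t ^ b i := by
  rw [algebraicIndependent_iff]
  intro p hp
  by_contra hp0
  have hexp : Function.Injective (Finsupp.linearCombination ℕ b) := hb.restrict_scalars' ℕ
  refine htF (hF.mem_of_sum_rpow_eq_zero (support_nonempty.2 hp0)
    (fun d _ => (coeff d p).2) (fun d _ => ?_) (fun d hd => ?_) hexp.injOn ht ?_)
  · exact sum_mem fun i _ => nsmul_mem (hbF i) _
  · exact_mod_cast mem_support_iff.1 hd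
  · rw [← hp, aeval_rpow ht]
    rfl

theorem continuum_le_trdeg (hF : IsReallyClosed F) (hproper : ∃ x, x ∉ F) (hcard : #F = 𝔠) :
    𝔠 ≤ Algebra.trdeg F ℝ := by
  obtain ⟨t, ht, htF⟩ := Subfield.exists_pos_notMem hproper
  let B := Module.Free.chooseBasis ℚ F
  have hrank : #(Module.Free.ChooseBasisIndex ℚ F) = 𝔠 := by
    rw [← Module.Free.rank_eq_card_chooseBasisIndex, Module.Free.rank_eq_mk_of_infinite_lt ℚ F,
      hcard]
    simpa [hcard] using aleph0_lt_continuum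
  have hB : LinearIndependent ℚ fun i => (B i : ℝ) :=
    B.linearIndependent.map' F.subtype.toAddMonoidHom.toRatLinearMap
      (LinearMap.ker_eq_bot.2 Subtype.val_injective)
  exact hrank ▸ (hF.algebraicIndependent_rpow ht htF (fun i => (B i).2) hB).cardinalMk_le_trdeg

end IsReallyClosed

theorem really_closed_proper_subfield_trdeg_continuum
    (F : Subfield ℝ) (hF : IsReallyClosed F) (hproper : ∃ x : ℝ, x ∉ F) :
    trdegOver F = Cardinal.continuum := by
  change Algebra.trdeg F ℝ = 𝔠
  refine le_antisymm (ciSup_le' fun s => (mk_set_le s.1).trans_eq mk_real) ?_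
  by_contra! hlt
  have hcard : #F = 𝔠 := by
    refine le_antisymm ((mk_subtype_le _).trans_eq mk_real) ?_
    have := mk_real ▸ Algebra.cardinalMk_le_max_trdeg F ℝ
    simpa [hlt.not_ge, aleph0_lt_continuum.not_ge] using this
  exact hlt.not_ge (hF.continuum_le_trdeg hproper hcard)
end

section
/- There is a countable set 𝓕 of continuously differentiable (C¹) functions, each of the form f : U → ℝ with U an open subset of ℝⁿ for some n ≥ 1, such that for every non-empty set S ⊆ ℝ, the really closure of S is exactly the set {f(s₀, …, s_{k−1}) : f ∈ 𝓕 with domain an open subset of ℝᵏ, s₀, …, s_{k−1} ∈ S, and (s₀, …, s_{k−1}) in the domain of f}. -/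
open Set Filter Topology Finset

/-- The *really closure* of `S ⊆ ℝ`: the smallest really closed subfield of `ℝ`
containing `S`. -/
noncomputable def reallyClosure (S : Set ℝ) : Subfield ℝ :=
  sInf {F : Subfield ℝ | IsReallyClosed F ∧ S ⊆ F}

lemma isReallyClosed_top : IsReallyClosed ⊤ := by
  intro n hn a b ha hb ha0 hb0 x hx hsum; trivial

lemma mem_reallyClosure {S : Set ℝ} {x : ℝ} :
    x ∈ reallyClosure S ↔ ∀ F : Subfield ℝ, IsReallyClosed F → S ⊆ F → x ∈ F := by
  simp [reallyClosure, Subfield.mem_sInf]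

lemma subset_reallyClosure (S : Set ℝ) : S ⊆ (reallyClosure S : Set ℝ) := by
  intro x hx
  exact mem_reallyClosure.2 fun F _ hSF => hSF hx

lemma isReallyClosed_reallyClosure (S : Set ℝ) : IsReallyClosed (reallyClosure S) := by
  intro n hn a b ha hb ha0 hb0 x hx hsum
  refine mem_reallyClosure.2 fun F hF hSF => ?_
  exact hF n hn a b (fun i => mem_reallyClosure.1 (ha i) F hF hSF)
    (fun i => mem_reallyClosure.1 (hb i) F hF hSF) ha0 hb0 x hx hsum

lemma reallyClosure_le {S : Set ℝ} {F : Subfield ℝ} (hF : IsReallyClosed F) (hSF : S ⊆ F) :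
    reallyClosure S ≤ F :=
  sInf_le ⟨hF, hSF⟩

/-- The key algebraic reduction: any positive root of a generalized polynomial with data in a
subfield `F` is a *simple* root of some generalized polynomial with data in `F`. -/
lemma reduction (F : Subfield ℝ) :
    ∀ n, 1 ≤ n → ∀ a b : Fin n → ℝ, (∀ i, a i ∈ F) → (∀ i, b i ∈ F) → (∀ i, a i ≠ 0) →
    Function.Injective b → ∀ x : ℝ, 0 < x → ∑ i, a i * x ^ b i = 0 →
    ∃ m, ∃ a' b' : Fin m → ℝ, (∀ i, a' i ∈ F) ∧ (∀ i, b' i ∈ F) ∧ (∀ i, a' i ≠ 0) ∧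
      Function.Injective b' ∧ ∑ i, a' i * x ^ b' i = 0 ∧ ∑ i, a' i * b' i * x ^ b' i ≠ 0 := by
  intro n
  induction n using Nat.strong_induction_on with
  | _ n IH =>
    intro hn a b ha hb ha0 hbinj x hx hsum
    by_cases hder : ∑ i, a i * b i * x ^ b i ≠ 0
    · exact ⟨n, a, b, ha, hb, ha0, hbinj, hsum, hder⟩
    push_neg at hder
    -- n = 1 is impossible
    obtain ⟨n', rfl⟩ : ∃ n', n = n' + 1 := ⟨n - 1, (Nat.succ_pred_eq_of_pos hn).symm⟩
    rcases Nat.eq_zero_or_pos n' with rfl | hn'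
    · exfalso
      have : a 0 * x ^ b 0 = 0 := by simpa using hsum
      rcases mul_eq_zero.1 this with h | h
      · exact ha0 0 h
      · exact (Real.rpow_pos_of_pos hx (b 0)).ne' h
    · -- build the new generalized polynomial with n' terms
      set l : Fin (n' + 1) := Fin.last n' with hl
      set A : Fin n' → ℝ := fun i => a i.castSucc * (b i.castSucc - b l) with hA
      set B : Fin n' → ℝ := fun i => b i.castSucc - b l with hB
      have key : ∑ i : Fin (n' + 1), a i * (b i - b l) * x ^ b i = 0 := by
        have : ∑ i : Fin (n' + 1), a i * (b i - b l) * x ^ b i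
            = (∑ i, a i * b i * x ^ b i) - b l * ∑ i, a i * x ^ b i := by
          rw [Finset.mul_sum, ← Finset.sum_sub_distrib]
          congr 1; ext i; ring
        rw [this, hder, hsum, mul_zero, sub_zero]
      have key' : ∑ i : Fin n', a i.castSucc * (b i.castSucc - b l) * x ^ b i.castSucc = 0 := by
        have := key
        rw [Fin.sum_univ_castSucc] at this
        simpa [hl] using this
      have keyB : ∑ i : Fin n', A i * x ^ B i = 0 := by
        have : ∀ i : Fin n', A i * x ^ B i
            = (a i.castSucc * (b i.castSucc - b l) * x ^ b i.castSucc) / x ^ b l := by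
          intro i
          rw [hA, hB]
          rw [Real.rpow_sub hx]
          field_simp
        rw [Finset.sum_congr rfl fun i _ => this i, ← Finset.sum_div, key', zero_div]
      have hcs : ∀ i : Fin n', (i.castSucc : Fin (n' + 1)) ≠ l := by
        intro i h
        exact (Fin.castSucc_lt_last i).ne h
      refine IH n' (by omega) hn' A B ?_ ?_ ?_ ?_ x hx keyB
      · intro i; exact F.mul_mem (ha _) (F.sub_mem (hb _) (hb _))
      · intro i; exact F.sub_mem (hb _) (hb _)
      · intro i
        exact mul_ne_zero (ha0 _) (sub_ne_zero.2 fun h => hcs i (hbinj h))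
      · intro i j hij
        have : b i.castSucc = b j.castSucc := by
          have := sub_left_injective.eq_iff.1 hij
          linarith [hij]
        exact Fin.castSucc_injective _ (hbinj this) ▸ rfl


namespace GPRoot

variable {n : ℕ}

/-- coefficient part of a combined vector -/
def pa (v : Fin (n + n) → ℝ) (i : Fin n) : ℝ := v (Fin.castAdd n i)
/-- exponent part of a combined vector -/
def pb (v : Fin (n + n) → ℝ) (i : Fin n) : ℝ := v (Fin.natAdd n i)

noncomputable def P (v : Fin (n + n) → ℝ) (y : ℝ) : ℝ := ∑ i, pa v i * y ^ pb v i
noncomputable def DP (v : Fin (n + n) → ℝ) (y : ℝ) : ℝ := ∑ i, pa v i * pb v i * y ^ pb v i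

lemma contDiffAt_P {v : Fin (n + n) → ℝ} {y : ℝ} (hy : 0 < y) :
    ContDiffAt ℝ (⊤ : ℕ∞) (fun p : (Fin (n + n) → ℝ) × ℝ => P p.1 p.2) (v, y) := by
  apply ContDiffAt.sum
  intro i _
  have h1 : ContDiffAt ℝ (⊤ : ℕ∞) (fun p : (Fin (n + n) → ℝ) × ℝ => p.2 ^ pb p.1 i) (v, y) := by
    have := Real.contDiffAt_rpow_of_ne (y, pb v i) (ne_of_gt hy) (n := (⊤ : ℕ∞))
    exact this.comp (v, y) (contDiffAt_snd.prodMk ((contDiffAt_pi.1 contDiffAt_fst) _))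
  exact (((contDiffAt_pi.1 contDiffAt_fst) _)).mul h1

lemma contDiffAt_DP {v : Fin (n + n) → ℝ} {y : ℝ} (hy : 0 < y) :
    ContDiffAt ℝ (⊤ : ℕ∞) (fun p : (Fin (n + n) → ℝ) × ℝ => DP p.1 p.2) (v, y) := by
  apply ContDiffAt.sum
  intro i _
  have h1 : ContDiffAt ℝ (⊤ : ℕ∞) (fun p : (Fin (n + n) → ℝ) × ℝ => p.2 ^ pb p.1 i) (v, y) := by
    have := Real.contDiffAt_rpow_of_ne (y, pb v i) (ne_of_gt hy) (n := (⊤ : ℕ∞))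
    exact this.comp (v, y) (contDiffAt_snd.prodMk ((contDiffAt_pi.1 contDiffAt_fst) _))
  exact ((((contDiffAt_pi.1 contDiffAt_fst) _)).mul ((contDiffAt_pi.1 contDiffAt_fst) _)).mul h1

lemma continuousOn_P :
    ContinuousOn (fun p : (Fin (n + n) → ℝ) × ℝ => P p.1 p.2) {p | 0 < p.2} := by
  intro p hp
  exact ((contDiffAt_P hp).continuousAt).continuousWithinAt

lemma continuousOn_DP :
    ContinuousOn (fun p : (Fin (n + n) → ℝ) × ℝ => DP p.1 p.2) {p | 0 < p.2} := by
  intro p hp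
  exact ((contDiffAt_DP hp).continuousAt).continuousWithinAt

lemma continuousAt_P_param {v₀ : Fin (n + n) → ℝ} {y : ℝ} (hy : 0 < y) :
    ContinuousAt (fun v => P v y) v₀ := by
  have h := (contDiffAt_P (v := v₀) hy).continuousAt
  have h2 : ContinuousAt (fun v : Fin (n+n) → ℝ => (v, y)) v₀ :=
    continuousAt_id.prodMk continuousAt_const
  simpa [Function.comp_def, ContinuousAt] using Filter.Tendsto.comp h h2

lemma hasDerivAt_P {v : Fin (n + n) → ℝ} {y : ℝ} (hy : 0 < y) :
    HasDerivAt (P v) (DP v y / y) y := by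
  have : ∀ i : Fin n, HasDerivAt (fun z => pa v i * z ^ pb v i)
      (pa v i * (pb v i * y ^ (pb v i - 1))) y :=
    fun i => (Real.hasDerivAt_rpow_const (Or.inl (ne_of_gt hy))).const_mul _
  have h := HasDerivAt.fun_sum (u := Finset.univ) (fun i _ => this i)
  have e : ∑ i, pa v i * (pb v i * y ^ (pb v i - 1)) = DP v y / y := by
    rw [DP, Finset.sum_div]
    congr 1; ext i
    rw [Real.rpow_sub hy, Real.rpow_one]
    field_simp
  rw [e] at h
  exact h

lemma continuousAt_P_y (v : Fin (n + n) → ℝ) {y : ℝ} (hy : 0 < y) :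
    ContinuousAt (P v) y := by
  have h := (contDiffAt_P (v := v) hy).continuousAt
  have h2 : ContinuousAt (fun z : ℝ => ((v, z) : (Fin (n+n) → ℝ) × ℝ)) y :=
    continuousAt_const.prodMk continuousAt_id
  simpa [Function.comp_def, ContinuousAt] using Filter.Tendsto.comp h h2

lemma continuousAt_DP_y (v : Fin (n + n) → ℝ) {y : ℝ} (hy : 0 < y) :
    ContinuousAt (DP v) y := by
  have h := (contDiffAt_DP (v := v) hy).continuousAt
  have h2 : ContinuousAt (fun z : ℝ => ((v, z) : (Fin (n+n) → ℝ) × ℝ)) y :=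
    continuousAt_const.prodMk continuousAt_id
  simpa [Function.comp_def, ContinuousAt] using Filter.Tendsto.comp h h2

lemma continuousOn_P_y (v : Fin (n + n) → ℝ) {c d : ℝ} (hc : 0 < c) :
    ContinuousOn (P v) (Icc c d) := fun y hy =>
  (continuousAt_P_y v (lt_of_lt_of_le hc hy.1)).continuousWithinAt

lemma continuousOn_DP_y (v : Fin (n + n) → ℝ) {c d : ℝ} (hc : 0 < c) :
    ContinuousOn (DP v) (Icc c d) := fun y hy =>
  (continuousAt_DP_y v (lt_of_lt_of_le hc hy.1)).continuousWithinAt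

/-- Rolle-based uniqueness of roots on an interval where `DP ≠ 0`. -/
lemma root_uniq {v : Fin (n + n) → ℝ} {c d : ℝ} (hc : 0 < c)
    (hDP : ∀ y ∈ Icc c d, DP v y ≠ 0) :
    ∀ y₁ ∈ Icc c d, ∀ y₂ ∈ Icc c d, P v y₁ = 0 → P v y₂ = 0 → y₁ = y₂ := by
  have key : ∀ y₁ ∈ Icc c d, ∀ y₂ ∈ Icc c d, y₁ < y₂ → P v y₁ = 0 → P v y₂ = 0 → False := by
    intro y₁ hy₁ y₂ hy₂ hlt h1 h2
    have hcont : ContinuousOn (P v) (Icc y₁ y₂) := fun y hy =>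
      (continuousAt_P_y v (lt_of_lt_of_le hc (le_trans hy₁.1 hy.1))).continuousWithinAt
    obtain ⟨z, hz, hz0⟩ := exists_hasDerivAt_eq_zero (f' := fun y => DP v y / y) hlt hcont
      (h1.trans h2.symm)
      (fun y hy => hasDerivAt_P (lt_of_lt_of_le hc (le_trans hy₁.1 hy.1.le)))
    have hzpos : 0 < z := lt_of_lt_of_le hc (le_trans hy₁.1 hz.1.le)
    have : DP v z = 0 := by
      field_simp at hz0
      simpa using hz0
    exact hDP z ⟨le_trans hy₁.1 hz.1.le, le_trans hz.2.le hy₂.2⟩ this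
  intro y₁ hy₁ y₂ hy₂ h1 h2
  rcases lt_trichotomy y₁ y₂ with h | h | h
  · exact absurd (key y₁ hy₁ y₂ hy₂ h h1 h2) (fun hf => hf)
  · exact h
  · exact absurd (key y₂ hy₂ y₁ hy₁ h h2 h1) (fun hf => hf)

/-- tube lemma for nonvanishing of a continuous function on a compact set of `y`'s. -/
lemma tube {G : ((Fin (n + n) → ℝ) × ℝ) → ℝ}
    (hG : ContinuousOn G {p | 0 < p.2}) {K : Set ℝ} (hK : IsCompact K)
    (hKpos : K ⊆ Ioi (0:ℝ)) {v₀ : Fin (n + n) → ℝ} (h : ∀ y ∈ K, G (v₀, y) ≠ 0) :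
    ∀ᶠ v in 𝓝 v₀, ∀ y ∈ K, G (v, y) ≠ 0 := by
  have hW : IsOpen ({p : (Fin (n + n) → ℝ) × ℝ | 0 < p.2} ∩ G ⁻¹' ({0}ᶜ)) :=
    hG.isOpen_inter_preimage (isOpen_lt continuous_const continuous_snd) isOpen_compl_singleton
  have hsub : ({v₀} : Set (Fin (n + n) → ℝ)) ×ˢ K ⊆
      {p : (Fin (n + n) → ℝ) × ℝ | 0 < p.2} ∩ G ⁻¹' ({0}ᶜ) := by
    rintro ⟨v, y⟩ ⟨hv, hy⟩
    rcases hv with rfl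
    exact ⟨hKpos hy, h y hy⟩
  obtain ⟨U1, U2, hU1, _, hsU, htK, hUV⟩ :=
    generalized_tube_lemma isCompact_singleton hK hW hsub
  filter_upwards [hU1.mem_nhds (hsU rfl)] with v hv y hy
  exact (hUV (Set.mk_mem_prod hv (htK hy))).2

variable (n) in
/-- domain of the root-extraction function -/
def rootSet (q r : ℝ) : Set (Fin (n + n) → ℝ) :=
  {v | (∀ i, pa v i ≠ 0) ∧ Function.Injective (pb v) ∧
    ∃ x ∈ Ioo q r, P v x = 0 ∧ DP v x ≠ 0 ∧ ∀ y ∈ Icc q r, P v y = 0 → y = x}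

open Classical in
variable (n) in
noncomputable def theRoot (q r : ℝ) (v : Fin (n + n) → ℝ) : ℝ :=
  if h : ∃ x ∈ Ioo q r, P v x = 0 ∧ DP v x ≠ 0 ∧ ∀ y ∈ Icc q r, P v y = 0 → y = x then
    h.choose else q

lemma theRoot_spec {q r : ℝ} {v : Fin (n + n) → ℝ} (hv : v ∈ rootSet n q r) :
    theRoot n q r v ∈ Ioo q r ∧ P v (theRoot n q r v) = 0 ∧ DP v (theRoot n q r v) ≠ 0 ∧
      ∀ y ∈ Icc q r, P v y = 0 → y = theRoot n q r v := by
  obtain ⟨-, -, hex⟩ := hv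
  rw [theRoot, dif_pos hex]
  obtain ⟨h1, h2, h3, h4⟩ := hex.choose_spec
  exact ⟨h1, h2, h3, h4⟩

/-- The key local lemma: near a point of `rootSet`, every vector is in `rootSet` and the root
moves by less than `δ'`. -/
lemma rootSet_near {q r : ℝ} (hq : 0 < q) {v₀ : Fin (n + n) → ℝ}
    (hv₀ : v₀ ∈ rootSet n q r) {δ' : ℝ} (hδ' : 0 < δ') :
    ∀ᶠ v in 𝓝 v₀, v ∈ rootSet n q r ∧ |theRoot n q r v - theRoot n q r v₀| < δ' := by
  obtain ⟨hx₀I, hP₀, hDP₀, huniq₀⟩ := theRoot_spec hv₀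
  set x₀ := theRoot n q r v₀ with hx₀
  have hx₀pos : 0 < x₀ := lt_trans hq hx₀I.1
  -- pick ε so that DP v₀ ≠ 0 on the ε-ball around x₀
  have hDPcont : ContinuousAt (DP v₀) x₀ := continuousAt_DP_y v₀ hx₀pos
  have hev : ∀ᶠ y in 𝓝 x₀, DP v₀ y ≠ 0 := hDPcont.eventually_ne hDP₀
  obtain ⟨ε, hε, hball⟩ := Metric.eventually_nhds_iff.1 hev
  set δ : ℝ := min (min (ε / 2) (δ' / 2)) (min ((x₀ - q) / 2) ((r - x₀) / 2)) with hδdef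
  have hδpos : 0 < δ := by
    refine lt_min (lt_min (by linarith) (by linarith)) (lt_min ?_ ?_)
    · have := hx₀I.1; linarith
    · have := hx₀I.2; linarith
  set e₁ := x₀ - δ with he₁
  set e₂ := x₀ + δ with he₂
  have hδε : δ < ε := by
    have : δ ≤ ε / 2 := le_trans (min_le_left _ _) (min_le_left _ _)
    linarith
  have hδδ' : δ < δ' := by
    have : δ ≤ δ' / 2 := le_trans (min_le_left _ _) (min_le_right _ _)
    linarith
  have he₁q : q < e₁ := by
    have : δ ≤ (x₀ - q) / 2 := le_trans (min_le_right _ _) (min_le_left _ _)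
    simp only [he₁]; linarith
  have he₂r : e₂ < r := by
    have : δ ≤ (r - x₀) / 2 := le_trans (min_le_right _ _) (min_le_right _ _)
    simp only [he₂]; linarith
  have he₁pos : 0 < e₁ := lt_trans hq he₁q
  have hJDP : ∀ y ∈ Icc e₁ e₂, DP v₀ y ≠ 0 := by
    intro y hy
    apply hball
    rw [Real.dist_eq, abs_sub_lt_iff]
    constructor
    · have := hy.2; simp only [he₂] at this; linarith
    · have := hy.1; simp only [he₁] at this; linarith
  -- sign of DP v₀ is constant on J
  have hsign : (∀ y ∈ Icc e₁ e₂, 0 < DP v₀ y) ∨ (∀ y ∈ Icc e₁ e₂, DP v₀ y < 0) := by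
    by_contra hcon
    push_neg at hcon
    obtain ⟨⟨y₁, hy₁, hy₁'⟩, ⟨y₂, hy₂, hy₂'⟩⟩ := hcon
    have hconn : uIcc y₁ y₂ ⊆ Icc e₁ e₂ := uIcc_subset_Icc hy₁ hy₂
    have hcont : ContinuousOn (DP v₀) (uIcc y₁ y₂) := fun y hy =>
      (continuousAt_DP_y v₀ (lt_of_lt_of_le he₁pos (hconn hy).1)).continuousWithinAt
    have : (0:ℝ) ∈ uIcc (DP v₀ y₁) (DP v₀ y₂) := by
      rw [Set.mem_uIcc]
      rcases le_total (DP v₀ y₁) (DP v₀ y₂) with h | h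
      · left; exact ⟨by linarith, by linarith⟩
      · right; exact ⟨by linarith, by linarith⟩
    obtain ⟨z, hz, hz0⟩ := intermediate_value_uIcc hcont this
    exact hJDP z (hconn hz) hz0
  -- strict monotonicity of P v₀ on J, and hence strict signs at the endpoints
  have he₁x₀ : e₁ < x₀ := by simp only [he₁]; linarith
  have hx₀e₂ : x₀ < e₂ := by simp only [he₂]; linarith
  have hPcontJ : ContinuousOn (P v₀) (Icc e₁ e₂) := continuousOn_P_y v₀ he₁pos
  have hderiv : ∀ y ∈ interior (Icc e₁ e₂), deriv (P v₀) y = DP v₀ y / y := by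
    intro y hy
    rw [interior_Icc] at hy
    exact (hasDerivAt_P (lt_trans he₁pos hy.1)).deriv
  have hsignP : P v₀ e₁ < 0 ∧ 0 < P v₀ e₂ ∨ 0 < P v₀ e₁ ∧ P v₀ e₂ < 0 := by
    rcases hsign with hpos | hneg
    · left
      have hmono : StrictMonoOn (P v₀) (Icc e₁ e₂) := by
        apply strictMonoOn_of_deriv_pos (convex_Icc _ _) hPcontJ
        intro y hy
        rw [hderiv y hy]
        rw [interior_Icc] at hy
        exact div_pos (hpos y ⟨hy.1.le, hy.2.le⟩) (lt_trans he₁pos hy.1)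
      constructor
      · have := hmono (left_mem_Icc.2 (by linarith)) ⟨he₁x₀.le, hx₀e₂.le⟩ he₁x₀
        rwa [hP₀] at this
      · have := hmono ⟨he₁x₀.le, hx₀e₂.le⟩ (right_mem_Icc.2 (by linarith)) hx₀e₂
        rwa [hP₀] at this
    · right
      have hmono : StrictAntiOn (P v₀) (Icc e₁ e₂) := by
        apply strictAntiOn_of_deriv_neg (convex_Icc _ _) hPcontJ
        intro y hy
        rw [hderiv y hy]
        rw [interior_Icc] at hy
        exact div_neg_of_neg_of_pos (hneg y ⟨hy.1.le, hy.2.le⟩) (lt_trans he₁pos hy.1)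
      constructor
      · have := hmono (left_mem_Icc.2 (by linarith)) ⟨he₁x₀.le, hx₀e₂.le⟩ he₁x₀
        rwa [hP₀] at this
      · have := hmono ⟨he₁x₀.le, hx₀e₂.le⟩ (right_mem_Icc.2 (by linarith)) hx₀e₂
        rwa [hP₀] at this
  -- the compact set away from the root
  set K : Set ℝ := Icc q e₁ ∪ Icc e₂ r with hKdef
  have hKcompact : IsCompact K := IsCompact.union isCompact_Icc isCompact_Icc
  have hKpos : K ⊆ Ioi (0:ℝ) := by
    rintro y (hy | hy)
    · exact lt_of_lt_of_le hq hy.1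
    · exact lt_of_lt_of_le (lt_trans he₁pos (lt_trans he₁x₀ hx₀e₂)) hy.1
  have hKP : ∀ y ∈ K, P v₀ y ≠ 0 := by
    rintro y hy hy0
    have hyIcc : y ∈ Icc q r := by
      rcases hy with hy | hy
      · exact ⟨hy.1, le_trans hy.2 (by linarith)⟩
      · exact ⟨le_trans (by linarith) hy.1, hy.2⟩
    have := huniq₀ y hyIcc hy0
    rcases hy with hy | hy
    · rw [this] at hy; linarith [hy.2]
    · rw [this] at hy; linarith [hy.1]
  -- eventualities
  have ev1 : ∀ᶠ v in 𝓝 v₀, ∀ i, pa v i ≠ 0 := by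
    refine Filter.eventually_all.2 fun i => ?_
    exact ((continuous_apply (Fin.castAdd n i)).continuousAt).eventually_ne (hv₀.1 i)
  have ev2 : ∀ᶠ v in 𝓝 v₀, ∀ i j : Fin n, i ≠ j → pb v i ≠ pb v j := by
    refine Filter.eventually_all.2 fun i => Filter.eventually_all.2 fun j => ?_
    by_cases hij : i = j
    · exact Filter.Eventually.of_forall fun v h => absurd hij h
    · have : pb v₀ i ≠ pb v₀ j := fun h => hij (hv₀.2.1 h)
      have hcont : ContinuousAt (fun v : Fin (n+n) → ℝ => pb v i - pb v j) v₀ := by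
        simp only [pb]
        exact ContinuousAt.sub ((continuous_apply (Fin.natAdd n i)).continuousAt)
          ((continuous_apply (Fin.natAdd n j)).continuousAt)
      have := hcont.eventually_ne (sub_ne_zero.2 this)
      filter_upwards [this] with v hv _
      exact sub_ne_zero.1 hv
  have ev4 : ∀ᶠ v in 𝓝 v₀, ∀ y ∈ K, P v y ≠ 0 :=
    tube continuousOn_P hKcompact hKpos hKP
  have ev5 : ∀ᶠ v in 𝓝 v₀, ∀ y ∈ Icc e₁ e₂, DP v y ≠ 0 :=
    tube continuousOn_DP isCompact_Icc
      (fun y hy => lt_of_lt_of_le he₁pos hy.1) hJDP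
  have c₁ : ContinuousAt (fun v => P v e₁) v₀ := continuousAt_P_param he₁pos
  have c₂ : ContinuousAt (fun v => P v e₂) v₀ :=
    continuousAt_P_param (lt_trans he₁pos (by simp only [he₁, he₂]; linarith))
  have ev3 : ∀ᶠ v in 𝓝 v₀, (P v e₁ < 0 ∧ 0 < P v e₂) ∨ (0 < P v e₁ ∧ P v e₂ < 0) := by
    rcases hsignP with ⟨ha, hb⟩ | ⟨ha, hb⟩
    · filter_upwards [Filter.Tendsto.eventually_lt_const ha c₁,
        Filter.Tendsto.eventually_const_lt hb c₂] with v hv1 hv2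
      exact Or.inl ⟨hv1, hv2⟩
    · filter_upwards [Filter.Tendsto.eventually_const_lt ha c₁,
        Filter.Tendsto.eventually_lt_const hb c₂] with v hv1 hv2
      exact Or.inr ⟨hv1, hv2⟩
  filter_upwards [ev1, ev2, ev3, ev4, ev5] with v h1 h2 h3 h4 h5
  have he₁e₂ : e₁ < e₂ := lt_trans he₁x₀ hx₀e₂
  have hPcont : ContinuousOn (P v) (Icc e₁ e₂) := continuousOn_P_y v he₁pos
  have hroot : ∃ x ∈ Ioo e₁ e₂, P v x = 0 := by
    rcases h3 with ⟨ha, hb⟩ | ⟨ha, hb⟩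
    · obtain ⟨x, hx, hx0⟩ := intermediate_value_Ioo he₁e₂.le hPcont ⟨ha, hb⟩
      exact ⟨x, hx, hx0⟩
    · obtain ⟨x, hx, hx0⟩ := intermediate_value_Ioo' he₁e₂.le hPcont ⟨hb, ha⟩
      exact ⟨x, hx, hx0⟩
  obtain ⟨x, hxI, hx0⟩ := hroot
  have hxqr : x ∈ Ioo q r := ⟨lt_trans he₁q hxI.1, lt_trans hxI.2 he₂r⟩
  have huniq : ∀ y ∈ Icc q r, P v y = 0 → y = x := by
    intro y hy hy0
    have hyJ : y ∈ Icc e₁ e₂ := by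
      by_contra hyJ
      have hyK : y ∈ K := by
        rcases le_or_gt y e₁ with hc | hc
        · exact Or.inl ⟨hy.1, hc⟩
        rcases le_or_gt e₂ y with hc2 | hc2
        · exact Or.inr ⟨hc2, hy.2⟩
        · exact absurd ⟨hc.le, hc2.le⟩ hyJ
      exact absurd hy0 (h4 y hyK)
    exact root_uniq he₁pos h5 y hyJ x ⟨hxI.1.le, hxI.2.le⟩ hy0 hx0
  have hpbinj : Function.Injective (pb v) := by
    intro i j hpb
    by_contra hij
    exact h2 i j hij hpb
  have hvmem : v ∈ rootSet n q r :=
    ⟨h1, hpbinj, x, hxqr, hx0, h5 x ⟨hxI.1.le, hxI.2.le⟩, huniq⟩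
  refine ⟨hvmem, ?_⟩
  obtain ⟨hrI, hrP, -, -⟩ := theRoot_spec hvmem
  have hxeq : theRoot n q r v = x := huniq _ ⟨hrI.1.le, hrI.2.le⟩ hrP
  rw [hxeq, abs_sub_lt_iff]
  have h₁ := hxI.1; have h₂ := hxI.2
  simp only [he₁, he₂] at h₁ h₂
  constructor <;> linarith

lemma isOpen_rootSet {q r : ℝ} (hq : 0 < q) : IsOpen (rootSet n q r) := by
  rw [isOpen_iff_mem_nhds]
  intro v₀ hv₀
  have h := (rootSet_near hq hv₀ one_pos).mono fun v hv => hv.1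
  rwa [Filter.eventually_iff, Set.setOf_mem_eq] at h

lemma contDiffAt_theRoot {q r : ℝ} (hq : 0 < q) {v₀ : Fin (n + n) → ℝ}
    (hv₀ : v₀ ∈ rootSet n q r) : ContDiffAt ℝ 1 (theRoot n q r) v₀ := by
  obtain ⟨hx₀I, hP₀, hDP₀, huniq₀⟩ := theRoot_spec hv₀
  set x₀ := theRoot n q r v₀ with hx₀def
  have hx₀pos : 0 < x₀ := lt_trans hq hx₀I.1
  set Pf : ((Fin (n+n) → ℝ) × ℝ) → ℝ := fun p => P p.1 p.2 with hPf
  have hPinf : ContDiffAt ℝ (⊤ : ℕ∞) Pf (v₀, x₀) := contDiffAt_P hx₀pos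
  have hdiff : DifferentiableAt ℝ Pf (v₀, x₀) := hPinf.differentiableAt (by simp)
  set L : ((Fin (n+n) → ℝ) × ℝ) →L[ℝ] ℝ := fderiv ℝ Pf (v₀, x₀) with hLdef
  have hL : HasFDerivAt Pf L (v₀, x₀) := hdiff.hasFDerivAt
  have hc : L (0, 1) = DP v₀ x₀ / x₀ := by
    have h1 : HasDerivAt (fun y => Pf (v₀, y)) (L (0, 1)) x₀ := by
      have h2 : HasDerivAt (fun y : ℝ => ((v₀, y) : (Fin (n+n) → ℝ) × ℝ)) (0, 1) x₀ :=
        (hasDerivAt_const x₀ v₀).prodMk (hasDerivAt_id x₀)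
      exact hL.comp_hasDerivAt x₀ h2
    exact h1.unique (hasDerivAt_P hx₀pos)
  have hcne : L (0, 1) ≠ 0 := by
    rw [hc]; exact div_ne_zero hDP₀ (ne_of_gt hx₀pos)
  set c : ℝ := L (0, 1) with hcdef
  -- the continuous linear equivalence which is the derivative of `Φ`
  set f₁ : ((Fin (n+n) → ℝ) × ℝ) →L[ℝ] ((Fin (n+n) → ℝ) × ℝ) :=
    (ContinuousLinearMap.fst ℝ _ _).prod L with hf₁
  set f₂ : ((Fin (n+n) → ℝ) × ℝ) →L[ℝ] ((Fin (n+n) → ℝ) × ℝ) :=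
    (ContinuousLinearMap.fst ℝ _ _).prod
      (c⁻¹ • (ContinuousLinearMap.snd ℝ _ _ -
        L.comp ((ContinuousLinearMap.fst ℝ _ _).prod 0))) with hf₂
  have hLsplit : ∀ e : Fin (n+n) → ℝ, ∀ t : ℝ, L (e, t) = L (e, 0) + t * c := by
    intro e t
    have : ((e, t) : (Fin (n+n) → ℝ) × ℝ) = (e, 0) + t • ((0 : Fin (n+n) → ℝ), (1:ℝ)) := by
      simp [Prod.ext_iff]
    rw [this, map_add, map_smul]
    simp [hcdef, smul_eq_mul]
  have happ₁ : ∀ p : (Fin (n+n) → ℝ) × ℝ, f₁ p = (p.1, L p) := fun p => rfl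
  have happ₂ : ∀ p : (Fin (n+n) → ℝ) × ℝ, f₂ p = (p.1, c⁻¹ * (p.2 - L (p.1, 0))) :=
    fun p => rfl
  have h₁ : Function.LeftInverse f₂ f₁ := by
    rintro ⟨e, t⟩
    rw [happ₁, happ₂]
    refine Prod.ext rfl ?_
    show c⁻¹ * (L (e, t) - L (e, 0)) = t
    rw [hLsplit e t]
    field_simp
    ring
  have h₂ : Function.RightInverse f₂ f₁ := by
    rintro ⟨e, s⟩
    rw [happ₂, happ₁]
    refine Prod.ext rfl ?_
    show L (e, c⁻¹ * (s - L (e, 0))) = s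
    rw [hLsplit e (c⁻¹ * (s - L (e, 0)))]
    field_simp
    ring
  set M := ContinuousLinearEquiv.equivOfInverse f₁ f₂ h₁ h₂ with hM
  set Φ : ((Fin (n+n) → ℝ) × ℝ) → ((Fin (n+n) → ℝ) × ℝ) := fun p => (p.1, Pf p) with hΦ
  have hPhiinf : ContDiffAt ℝ (⊤ : ℕ∞) Φ (v₀, x₀) := contDiffAt_fst.prodMk hPinf
  have hΦd : HasFDerivAt Φ (M : ((Fin (n+n) → ℝ) × ℝ) →L[ℝ] ((Fin (n+n) → ℝ) × ℝ)) (v₀, x₀) := by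
    have h := (hasFDerivAt_fst (𝕜 := ℝ) (p := ((v₀, x₀) : (Fin (n+n) → ℝ) × ℝ))).prodMk hL
    exact h
  have hkey : Φ (v₀, x₀) = (v₀, 0) := by
    simp only [hΦ, hPf]
    rw [hP₀]
  set g : ((Fin (n+n) → ℝ) × ℝ) → ((Fin (n+n) → ℝ) × ℝ) := hPhiinf.localInverse hΦd (by simp) with hg
  have hgC : ContDiffAt ℝ (⊤ : ℕ∞) g ((v₀, 0) : (Fin (n+n) → ℝ) × ℝ) := by
    rw [← hkey]
    exact hPhiinf.to_localInverse hΦd (by simp)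
  have hright : ∀ᶠ p in 𝓝 ((v₀, 0) : (Fin (n+n) → ℝ) × ℝ), Φ (g p) = p := by
    have h := (hPhiinf.hasStrictFDerivAt' hΦd (by simp)).eventually_right_inverse
    rwa [hkey] at h
  have hgval : g ((v₀, 0) : (Fin (n+n) → ℝ) × ℝ) = (v₀, x₀) := by
    rw [← hkey]
    exact hPhiinf.localInverse_apply_image hΦd (by simp)
  have hιC : ContDiffAt ℝ (⊤ : ℕ∞) (fun v : Fin (n+n) → ℝ => ((v, 0) : (Fin (n+n) → ℝ) × ℝ)) v₀ :=
    contDiffAt_id.prodMk contDiffAt_const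
  have hιT : Tendsto (fun v : Fin (n+n) → ℝ => ((v, 0) : (Fin (n+n) → ℝ) × ℝ)) (𝓝 v₀)
      (𝓝 ((v₀, 0) : (Fin (n+n) → ℝ) × ℝ)) := hιC.continuousAt
  set h : (Fin (n+n) → ℝ) → ℝ := fun v => (g (v, 0)).2 with hh
  have hhC : ContDiffAt ℝ 1 h v₀ := by
    have h1 : ContDiffAt ℝ (⊤ : ℕ∞) (fun v : Fin (n+n) → ℝ => g (v, 0)) v₀ :=
      hgC.comp v₀ hιC
    exact (contDiffAt_snd.comp v₀ h1).of_le (mod_cast le_top)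
  have hhT : Tendsto h (𝓝 v₀) (𝓝 x₀) := by
    have h1 : ContinuousAt (fun v : Fin (n+n) → ℝ => g (v, 0)) v₀ :=
      (hgC.comp v₀ hιC).continuousAt
    have h2 : Tendsto (fun v : Fin (n+n) → ℝ => g (v, 0)) (𝓝 v₀) (𝓝 ((v₀, x₀) :
        (Fin (n+n) → ℝ) × ℝ)) := by
      rw [← hgval]; exact h1
    exact (continuous_snd.tendsto _).comp h2
  have E1 : ∀ᶠ v in 𝓝 v₀, Φ (g (v, 0)) = (v, 0) := hιT.eventually hright
  have E2 : ∀ᶠ v in 𝓝 v₀, h v ∈ Ioo q r := hhT.eventually (Ioo_mem_nhds hx₀I.1 hx₀I.2)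
  have E3 : ∀ᶠ v in 𝓝 v₀, v ∈ rootSet n q r :=
    (rootSet_near hq hv₀ one_pos).mono fun v hv => hv.1
  have heq : (theRoot n q r) =ᶠ[𝓝 v₀] h := by
    filter_upwards [E1, E2, E3] with v h1 h2 h3
    have hfst : (g (v, 0)).1 = v := congrArg Prod.fst h1
    have hsnd : Pf (g (v, 0)) = 0 := congrArg Prod.snd h1
    have hroot : P v (h v) = 0 := by
      rw [hPf] at hsnd
      simp only at hsnd
      rw [hfst] at hsnd
      exact hsnd
    obtain ⟨-, -, -, huniq⟩ := theRoot_spec h3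
    exact (huniq (h v) ⟨h2.1.le, h2.2.le⟩ hroot).symm
  exact hhC.congr_of_eventuallyEq heq

lemma contDiffOn_theRoot {q r : ℝ} (hq : 0 < q) :
    ContDiffOn ℝ 1 (theRoot n q r) (rootSet n q r) := fun v hv =>
  (contDiffAt_theRoot hq hv).contDiffWithinAt

/-- a simple root can be isolated by rational endpoints -/
lemma isolate {v : Fin (n + n) → ℝ} {x : ℝ} (hx : 0 < x) (hP : P v x = 0)
    (hDP : DP v x ≠ 0) :
    ∃ q r : ℚ, 0 < (q:ℝ) ∧ (q:ℝ) < x ∧ x < (r:ℝ) ∧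
      ∀ y ∈ Icc (q:ℝ) (r:ℝ), P v y = 0 → y = x := by
  have hd := hasDerivAt_P (v := v) hx
  have hslope := hasDerivAt_iff_tendsto_slope.1 hd
  have hne : ∀ᶠ y in 𝓝[≠] x, slope (P v) x y ≠ 0 :=
    hslope.eventually_ne (div_ne_zero hDP hx.ne')
  have hne' : ∀ᶠ y in 𝓝[≠] x, P v y ≠ 0 := by
    filter_upwards [hne] with y hy h0
    apply hy
    rw [slope_def_field, hP, h0, sub_zero, zero_div]
  rw [eventually_nhdsWithin_iff] at hne'
  obtain ⟨ε, hε, hball⟩ := Metric.eventually_nhds_iff.1 hne'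
  obtain ⟨q, hq1, hq2⟩ := exists_rat_btwn (show max (x - ε) 0 < x from max_lt (by linarith) hx)
  obtain ⟨r, hr1, hr2⟩ := exists_rat_btwn (show x < x + ε by linarith)
  refine ⟨q, r, lt_of_le_of_lt (le_max_right _ _) hq1, hq2, hr1, ?_⟩
  intro y hy h0
  by_contra hyx
  have hdist : dist y x < ε := by
    rw [Real.dist_eq, abs_sub_lt_iff]
    constructor
    · have h2 := hy.2; linarith
    · have h1 := hy.1
      have := le_max_left (x - ε) (0:ℝ)
      linarith
  exact hball hdist (fun hmem => hyx hmem) h0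

end GPRoot




open GPRoot

section FnLayer

structure Fn where
  k : ℕ
  m : ℕ
  U : Set (Fin k → ℝ)
  f : (Fin k → ℝ) → (Fin m → ℝ)
  hU : IsOpen U
  hf : ContDiffOn ℝ 1 f U

def varFn : Fn :=
  ⟨1, 1, univ, fun s _ => s 0, isOpen_univ,
    contDiffOn_pi.2 fun _ => (contDiff_apply ℝ ℝ (0 : Fin 1)).contDiffOn⟩

noncomputable def constFn (q : ℚ) : Fn :=
  ⟨1, 1, univ, fun _ _ => (q : ℝ), isOpen_univ, contDiffOn_const⟩

def addFn : Fn :=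
  ⟨2, 1, univ, fun s _ => s 0 + s 1, isOpen_univ,
    contDiffOn_pi.2 fun _ =>
      ((contDiff_apply ℝ ℝ (0 : Fin 2)).add (contDiff_apply ℝ ℝ (1 : Fin 2))).contDiffOn⟩

def mulFn : Fn :=
  ⟨2, 1, univ, fun s _ => s 0 * s 1, isOpen_univ,
    contDiffOn_pi.2 fun _ =>
      ((contDiff_apply ℝ ℝ (0 : Fin 2)).mul (contDiff_apply ℝ ℝ (1 : Fin 2))).contDiffOn⟩

def negFn : Fn :=
  ⟨1, 1, univ, fun s _ => -s 0, isOpen_univ,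
    contDiffOn_pi.2 fun _ => ((contDiff_apply ℝ ℝ (0 : Fin 1)).neg).contDiffOn⟩

noncomputable def invFn : Fn :=
  ⟨1, 1, {s | s 0 ≠ 0}, fun s _ => (s 0)⁻¹,
    isOpen_ne.preimage (continuous_apply 0),
    contDiffOn_pi.2 fun _ => by
      apply ContDiffOn.inv
      · exact (contDiff_apply ℝ ℝ (0 : Fin 1)).contDiffOn
      · exact fun s hs => hs⟩

def emptyFn : Fn :=
  ⟨1, 0, univ, fun _ => finZeroElim, isOpen_univ, contDiffOn_pi.2 fun i => i.elim0⟩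

noncomputable def rootFn (n : ℕ) (q r : ℚ) : Fn :=
  ⟨n + n, 1, if (0:ℝ) < (q:ℝ) then rootSet n q r else ∅,
    fun v _ => theRoot n q r v,
    by split_ifs with h; exacts [isOpen_rootSet h, isOpen_empty],
    by
      split_ifs with h
      · exact contDiffOn_pi.2 fun _ => contDiffOn_theRoot h
      · exact fun v hv => hv.elim⟩

def Fn.comp (g h : Fn) (e : h.m = g.k) : Fn where
  k := h.k
  m := g.m
  U := h.U ∩ (fun s => (fun i : Fin g.k => h.f s (Fin.cast e.symm i))) ⁻¹' g.U
  f := fun s => g.f (fun i => h.f s (Fin.cast e.symm i))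
  hU := by
    apply ContinuousOn.isOpen_inter_preimage ?_ h.hU g.hU
    exact continuousOn_pi.2 fun i => (continuousOn_pi.1 h.hf.continuousOn) (Fin.cast e.symm i)
  hf := by
    have hinner : ContDiffOn ℝ 1
        (fun s => (fun i : Fin g.k => h.f s (Fin.cast e.symm i)))
        (h.U ∩ (fun s => (fun i : Fin g.k => h.f s (Fin.cast e.symm i))) ⁻¹' g.U) :=
      contDiffOn_pi.2 fun i =>
        ((contDiffOn_pi.1 h.hf) (Fin.cast e.symm i)).mono inter_subset_left
    exact ContDiffOn.comp g.hf hinner fun s hs => hs.2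

def Fn.pair (g h : Fn) : Fn where
  k := g.k + h.k
  m := g.m + h.m
  U := (fun s => s ∘ Fin.castAdd h.k) ⁻¹' g.U ∩ (fun s => s ∘ Fin.natAdd g.k) ⁻¹' h.U
  f := fun s => Fin.append (g.f (s ∘ Fin.castAdd h.k)) (h.f (s ∘ Fin.natAdd g.k))
  hU := by
    apply IsOpen.inter
    · exact g.hU.preimage (continuous_pi fun i => continuous_apply _)
    · exact h.hU.preimage (continuous_pi fun i => continuous_apply _)
  hf := by
    have hres₁ : ContDiff ℝ 1 (fun s : Fin (g.k + h.k) → ℝ => s ∘ Fin.castAdd h.k) :=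
      contDiff_pi.2 fun i => contDiff_apply ℝ ℝ (Fin.castAdd h.k i)
    have hres₂ : ContDiff ℝ 1 (fun s : Fin (g.k + h.k) → ℝ => s ∘ Fin.natAdd g.k) :=
      contDiff_pi.2 fun i => contDiff_apply ℝ ℝ (Fin.natAdd g.k i)
    refine contDiffOn_pi.2 fun j => ?_
    refine Fin.addCases (motive := fun j => ContDiffOn ℝ 1 (fun s =>
      Fin.append (g.f (s ∘ Fin.castAdd h.k)) (h.f (s ∘ Fin.natAdd g.k)) j) _)
      (fun i => ?_) (fun i => ?_) j
    · simp only [Fin.append_left]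
      exact ((contDiffOn_pi.1 g.hf) i).comp hres₁.contDiffOn fun s hs => hs.1
    · simp only [Fin.append_right]
      exact ((contDiffOn_pi.1 h.hf) i).comp hres₂.contDiffOn fun s hs => hs.2

def BaseFns : Set Fn :=
  {varFn, addFn, mulFn, negFn, invFn, emptyFn} ∪
    (Set.range fun q : ℚ => constFn q) ∪
    (Set.range fun t : ℕ × ℚ × ℚ => rootFn t.1 t.2.1 t.2.2)

lemma countable_BaseFns : BaseFns.Countable := by
  apply Set.Countable.union
  apply Set.Countable.union
  · exact Set.Finite.countable (by
      exact (Set.finite_singleton emptyFn).insert invFn |>.insert negFn |>.insert mulFn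
        |>.insert addFn |>.insert varFn)
  · exact Set.countable_range _
  · exact Set.countable_range _

def Stage : ℕ → Set Fn
  | 0 => BaseFns
  | (N + 1) => Stage N ∪
      {F | ∃ g ∈ Stage N, ∃ h ∈ Stage N, ∃ e : h.m = g.k, F = Fn.comp g h e} ∪
      {F | ∃ g ∈ Stage N, ∃ h ∈ Stage N, F = Fn.pair g h}

lemma countable_Stage : ∀ N, (Stage N).Countable := by
  intro N
  induction N with
  | zero => exact countable_BaseFns
  | succ N IH =>
    refine (IH.union ?_).union ?_
    · have : {F | ∃ g ∈ Stage N, ∃ h ∈ Stage N, ∃ e : h.m = g.k, F = Fn.comp g h e} =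
          ⋃ g ∈ Stage N, ⋃ h ∈ Stage N, {F | ∃ e : h.m = g.k, F = Fn.comp g h e} := by
        ext F; simp
      rw [this]
      refine IH.biUnion fun g _ => IH.biUnion fun h _ => ?_
      refine Set.Countable.mono ?_ (Set.countable_singleton
        (if e : h.m = g.k then Fn.comp g h e else emptyFn))
      rintro F ⟨e, rfl⟩
      simp [dif_pos e]
    · have : {F | ∃ g ∈ Stage N, ∃ h ∈ Stage N, F = Fn.pair g h} =
          Set.image2 Fn.pair (Stage N) (Stage N) := by
        ext F; simp [Set.mem_image2, eq_comm]
      rw [this]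
      exact Set.Countable.image2 IH IH _

def FF : Set Fn := ⋃ N, Stage N

lemma countable_FF : FF.Countable := Set.countable_iUnion countable_Stage

lemma Stage_mono : Monotone Stage := by
  apply monotone_nat_of_le_succ
  intro N F hF
  exact Or.inl (Or.inl hF)

lemma mem_FF_iff {F : Fn} : F ∈ FF ↔ ∃ N, F ∈ Stage N := Set.mem_iUnion

lemma base_mem_FF {F : Fn} (h : F ∈ BaseFns) : F ∈ FF := mem_FF_iff.2 ⟨0, h⟩

lemma comp_mem_FF {g h : Fn} (hg : g ∈ FF) (hh : h ∈ FF) (e : h.m = g.k) :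
    Fn.comp g h e ∈ FF := by
  obtain ⟨N₁, h₁⟩ := mem_FF_iff.1 hg
  obtain ⟨N₂, h₂⟩ := mem_FF_iff.1 hh
  refine mem_FF_iff.2 ⟨max N₁ N₂ + 1, ?_⟩
  exact Or.inl (Or.inr ⟨g, Stage_mono (le_max_left _ _) h₁, h,
    Stage_mono (le_max_right _ _) h₂, e, rfl⟩)

lemma pair_mem_FF {g h : Fn} (hg : g ∈ FF) (hh : h ∈ FF) : Fn.pair g h ∈ FF := by
  obtain ⟨N₁, h₁⟩ := mem_FF_iff.1 hg
  obtain ⟨N₂, h₂⟩ := mem_FF_iff.1 hh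
  refine mem_FF_iff.2 ⟨max N₁ N₂ + 1, ?_⟩
  exact Or.inr ⟨g, Stage_mono (le_max_left _ _) h₁, h, Stage_mono (le_max_right _ _) h₂, rfl⟩

end FnLayer


section Semantics

open GPRoot

/-- compute `Fin.append` by value arithmetic -/
lemma append_val {α : Type*} {m n : ℕ} (A : Fin m → α) (B : Fin n → α) (j : Fin (m + n)) :
    Fin.append A B j =
      if hj : (j : ℕ) < m then A ⟨j, hj⟩ else B ⟨(j : ℕ) - m, by omega⟩ := by
  refine Fin.addCases (motive := fun j => Fin.append A B j =
    if hj : (j : ℕ) < m then A ⟨j, hj⟩ else B ⟨(j : ℕ) - m, by omega⟩) ?_ ?_ j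
  · intro i
    rw [Fin.append_left, dif_pos (by simpa using i.2)]
    exact congrArg A (Fin.ext rfl)
  · intro i
    rw [Fin.append_right, dif_neg (by simp)]
    congr 1
    exact Fin.ext (by simp)

lemma append_mem {α : Type*} {m n : ℕ} {A : Fin m → α} {B : Fin n → α} {S : Set α}
    (hA : ∀ i, A i ∈ S) (hB : ∀ i, B i ∈ S) : ∀ j, Fin.append A B j ∈ S := by
  intro j
  rw [append_val]
  split_ifs
  · exact hA _
  · exact hB _

lemma append_restrict_left {m n : ℕ} (A : Fin m → ℝ) (B : Fin n → ℝ) :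
    (Fin.append A B) ∘ Fin.castAdd n = A :=
  funext fun i => Fin.append_left A B i

lemma append_restrict_right {m n : ℕ} (A : Fin m → ℝ) (B : Fin n → ℝ) :
    (Fin.append A B) ∘ Fin.natAdd m = B :=
  funext fun i => Fin.append_right A B i

lemma pa_append {m : ℕ} (A B : Fin m → ℝ) : pa (Fin.append A B) = A :=
  funext fun i => Fin.append_left A B i

lemma pb_append {m : ℕ} (A B : Fin m → ℝ) : pb (Fin.append A B) = B :=
  funext fun i => Fin.append_right A B i

lemma rootSet_zero_empty (q r : ℝ) : rootSet 0 q r = ∅ := by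
  refine eq_empty_iff_forall_notMem.2 fun v hv => ?_
  obtain ⟨-, -, x, -, -, hDP, -⟩ := hv
  simp [DP] at hDP

/-- Direction A: all values of functions in the family on closure points stay in the closure. -/
lemma stageA (S : Set ℝ) :
    ∀ N, ∀ F ∈ Stage N, ∀ s, s ∈ F.U → (∀ i, s i ∈ reallyClosure S) →
      ∀ j, F.f s j ∈ reallyClosure S := by
  intro N
  induction N with
  | zero =>
    rintro F (((rfl | rfl | rfl | rfl | rfl | rfl) | ⟨q, rfl⟩) | ⟨⟨n, q, r⟩, rfl⟩) s hsU hs j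
    · simp only [varFn] at hs ⊢
      exact hs 0
    · simp only [addFn] at hs ⊢
      exact Subfield.add_mem _ (hs 0) (hs 1)
    · simp only [mulFn] at hs ⊢
      exact Subfield.mul_mem _ (hs 0) (hs 1)
    · simp only [negFn] at hs ⊢
      exact Subfield.neg_mem _ (hs 0)
    · simp only [invFn] at hs ⊢
      exact Subfield.inv_mem _ (hs 0)
    · simp only [emptyFn] at j
      exact j.elim0
    · simp only [constFn]
      exact SubfieldClass.ratCast_mem _ q
    · -- root function
      by_cases hq : (0:ℝ) < (q:ℝ)
      · have hsU' : s ∈ rootSet n (q:ℝ) (r:ℝ) := by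
          have := hsU
          simp only [rootFn, if_pos hq] at this
          exact this
        obtain ⟨hI, hP, hDP, huniq⟩ := theRoot_spec hsU'
        have hn : 1 ≤ n := by
          rcases Nat.eq_zero_or_pos n with rfl | h
          · rw [rootSet_zero_empty] at hsU'
            exact absurd hsU' (notMem_empty _)
          · exact h
        show theRoot n (q:ℝ) (r:ℝ) s ∈ reallyClosure S
        refine isReallyClosed_reallyClosure S n hn (pa s) (pb s)
          (fun i => hs _) (fun i => hs _) hsU'.1
          (fun i j hij h => hij (hsU'.2.1 h)) _ (lt_trans hq hI.1) hP
      · exfalso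
        have := hsU
        simp only [rootFn, if_neg hq] at this
        exact notMem_empty _ this
  | succ N IH =>
    rintro F ((hF | ⟨g, hg, h, hh, e, rfl⟩) | ⟨g, hg, h, hh, rfl⟩) s hsU hs j
    · exact IH F hF s hsU hs j
    · refine IH g hg _ hsU.2 (fun i => IH h hh s hsU.1 hs _) j
    · have h₁ : ∀ i, (s ∘ Fin.castAdd h.k) i ∈ reallyClosure S := fun i => hs _
      have h₂ : ∀ i, (s ∘ Fin.natAdd g.k) i ∈ reallyClosure S := fun i => hs _
      show Fin.append (g.f (s ∘ Fin.castAdd h.k)) (h.f (s ∘ Fin.natAdd g.k)) j ∈ _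
      exact append_mem (S := (reallyClosure S : Set ℝ)) (fun i => IH g hg _ hsU.1 h₁ i)
        (fun i => IH h hh _ hsU.2 h₂ i) j

/-- the set of values of the family on tuples from `S` -/
def RSet (S : Set ℝ) : Set ℝ :=
  {x | ∃ F ∈ FF, ∃ e : F.m = 1, ∃ s : Fin F.k → ℝ,
    (∀ i, s i ∈ S) ∧ s ∈ F.U ∧ F.f s (Fin.cast e.symm 0) = x}

lemma RSet_subset_closure (S : Set ℝ) : RSet S ⊆ (reallyClosure S : Set ℝ) := by
  rintro x ⟨F, hF, e, s, hsS, hsU, rfl⟩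
  obtain ⟨N, hN⟩ := mem_FF_iff.1 hF
  exact stageA S N F hN s hsU (fun i => subset_reallyClosure S (hsS i)) _

lemma varFn_mem_BaseFns : varFn ∈ BaseFns := Or.inl (Or.inl (by left; rfl))

lemma var_mem_RSet {S : Set ℝ} {x : ℝ} (hx : x ∈ S) : x ∈ RSet S :=
  ⟨varFn, base_mem_FF varFn_mem_BaseFns, rfl, fun _ => x, fun _ => hx, mem_univ _, rfl⟩

lemma const_mem_RSet {S : Set ℝ} (hS : S.Nonempty) (q : ℚ) : (q : ℝ) ∈ RSet S :=
  ⟨constFn q, base_mem_FF (Or.inl (Or.inr ⟨q, rfl⟩)), rfl, fun _ => hS.choose,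
    fun _ => hS.choose_spec, mem_univ _, rfl⟩

lemma binop_mem {S : Set ℝ} (op : Fn) (hop : op ∈ FF) (hk : op.k = 2) (hm : op.m = 1)
    (G : ℝ → ℝ → ℝ)
    (hdom : ∀ w : Fin op.k → ℝ, w ∈ op.U)
    (hval : ∀ w : Fin op.k → ℝ,
      op.f w (Fin.cast hm.symm 0) = G (w (Fin.cast hk.symm 0)) (w (Fin.cast hk.symm 1)))
    {x y : ℝ} (hx : x ∈ RSet S) (hy : y ∈ RSet S) : G x y ∈ RSet S := by
  obtain ⟨F₁, hF₁, e₁, s₁, hs₁, hU₁, hv₁⟩ := hx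
  obtain ⟨F₂, hF₂, e₂, s₂, hs₂, hU₂, hv₂⟩ := hy
  have em : (Fn.pair F₁ F₂).m = op.k := by
    show F₁.m + F₂.m = op.k
    rw [e₁, e₂, hk]
  have h0 : (Fn.pair F₁ F₂).f (Fin.append s₁ s₂) (Fin.cast em.symm (Fin.cast hk.symm 0)) = x := by
    show Fin.append (F₁.f ((Fin.append s₁ s₂) ∘ Fin.castAdd F₂.k))
      (F₂.f ((Fin.append s₁ s₂) ∘ Fin.natAdd F₁.k)) _ = x
    rw [append_restrict_left, append_restrict_right]
    refine (append_val _ _ _).trans ?_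
    rw [dif_pos (by show ((0 : Fin 2) : ℕ) < F₁.m; rw [e₁]; norm_num)]
    rw [← hv₁]
    exact congrArg (F₁.f s₁) (Fin.ext rfl)
  have h1 : (Fn.pair F₁ F₂).f (Fin.append s₁ s₂) (Fin.cast em.symm (Fin.cast hk.symm 1)) = y := by
    show Fin.append (F₁.f ((Fin.append s₁ s₂) ∘ Fin.castAdd F₂.k))
      (F₂.f ((Fin.append s₁ s₂) ∘ Fin.natAdd F₁.k)) _ = y
    rw [append_restrict_left, append_restrict_right]
    refine (append_val _ _ _).trans ?_
    rw [dif_neg (by show ¬ ((1 : Fin 2) : ℕ) < F₁.m; rw [e₁]; norm_num)]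
    rw [← hv₂]
    refine congrArg (F₂.f s₂) (Fin.ext ?_)
    show ((1 : Fin 2) : ℕ) - F₁.m = ((0 : Fin 1) : ℕ)
    simp [e₁]
  refine ⟨Fn.comp op (Fn.pair F₁ F₂) em, comp_mem_FF hop (pair_mem_FF hF₁ hF₂) em, hm,
    Fin.append s₁ s₂, append_mem hs₁ hs₂, ⟨⟨?_, ?_⟩, hdom _⟩, ?_⟩
  · show (Fin.append s₁ s₂) ∘ Fin.castAdd F₂.k ∈ F₁.U
    rw [append_restrict_left]
    exact hU₁
  · show (Fin.append s₁ s₂) ∘ Fin.natAdd F₁.k ∈ F₂.U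
    rw [append_restrict_right]
    exact hU₂
  · show op.f (fun i => (Fn.pair F₁ F₂).f (Fin.append s₁ s₂) (Fin.cast em.symm i))
      (Fin.cast hm.symm 0) = G x y
    rw [hval]
    exact congrArg₂ G h0 h1

lemma unop_mem {S : Set ℝ} (op : Fn) (hop : op ∈ FF) (hk : op.k = 1) (hm : op.m = 1)
    (G : ℝ → ℝ)
    (hval : ∀ w : Fin op.k → ℝ, op.f w (Fin.cast hm.symm 0) = G (w (Fin.cast hk.symm 0)))
    {x : ℝ} (hx : x ∈ RSet S)
    (hdom : ∀ w : Fin op.k → ℝ, w (Fin.cast hk.symm 0) = x → w ∈ op.U) : G x ∈ RSet S := by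
  obtain ⟨F₁, hF₁, e₁, s₁, hs₁, hU₁, hv₁⟩ := hx
  have em : F₁.m = op.k := by rw [e₁, hk]
  have hw : F₁.f s₁ (Fin.cast em.symm (Fin.cast hk.symm 0)) = x := by
    rw [← hv₁]
    exact congrArg (F₁.f s₁) (Fin.ext rfl)
  refine ⟨Fn.comp op F₁ em, comp_mem_FF hop hF₁ em, hm, s₁, hs₁, ⟨hU₁, hdom _ hw⟩, ?_⟩
  show op.f (fun i => F₁.f s₁ (Fin.cast em.symm i)) (Fin.cast hm.symm 0) = G x
  rw [hval]
  exact congrArg G hw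

lemma addFn_mem_BaseFns : addFn ∈ BaseFns := Or.inl (Or.inl (by right; left; rfl))
lemma mulFn_mem_BaseFns : mulFn ∈ BaseFns := Or.inl (Or.inl (by right; right; left; rfl))
lemma negFn_mem_BaseFns : negFn ∈ BaseFns := Or.inl (Or.inl (by right; right; right; left; rfl))
lemma invFn_mem_BaseFns : invFn ∈ BaseFns :=
  Or.inl (Or.inl (by right; right; right; right; left; rfl))
lemma emptyFn_mem_BaseFns : emptyFn ∈ BaseFns :=
  Or.inl (Or.inl (by right; right; right; right; right; rfl))

noncomputable def RSub (S : Set ℝ) (hS : S.Nonempty) : Subfield ℝ where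
  carrier := RSet S
  zero_mem' := by simpa using const_mem_RSet hS 0
  one_mem' := by simpa using const_mem_RSet hS 1
  add_mem' := fun hx hy =>
    binop_mem addFn (base_mem_FF addFn_mem_BaseFns) rfl rfl (· + ·)
      (fun w => mem_univ w) (fun w => rfl) hx hy
  mul_mem' := fun hx hy =>
    binop_mem mulFn (base_mem_FF mulFn_mem_BaseFns) rfl rfl (· * ·)
      (fun w => mem_univ w) (fun w => rfl) hx hy
  neg_mem' := fun hx =>
    unop_mem negFn (base_mem_FF negFn_mem_BaseFns) rfl rfl (fun z => -z)
      (fun w => rfl) hx (fun w _ => mem_univ w)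
  inv_mem' := fun x hx => by
    by_cases h0 : x = 0
    · subst h0
      rw [inv_zero]
      simpa using const_mem_RSet hS 0
    · exact unop_mem invFn (base_mem_FF invFn_mem_BaseFns) rfl rfl (fun z => z⁻¹)
        (fun w => rfl) hx (fun w hw => by
          show w ⟨0, Nat.one_pos⟩ ≠ 0
          rw [show w ⟨0, Nat.one_pos⟩ = x from hw]
          exact h0)

lemma mem_RSub {S : Set ℝ} (hS : S.Nonempty) {x : ℝ} : x ∈ RSub S hS ↔ x ∈ RSet S := Iff.rfl

/-- every finite tuple of elements of `RSet S` is computed by a single vector-valued member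
of the family on a tuple from `S`. -/
lemma tupling {S : Set ℝ} (hS : S.Nonempty) :
    ∀ (N : ℕ) (x : Fin N → ℝ), (∀ i, x i ∈ RSet S) →
    ∃ G ∈ FF, ∃ e : G.m = N, ∃ u : Fin G.k → ℝ, (∀ j, u j ∈ S) ∧ u ∈ G.U ∧
      ∀ i : Fin N, G.f u (Fin.cast e.symm i) = x i := by
  intro N
  induction N with
  | zero =>
    intro x hx
    exact ⟨emptyFn, base_mem_FF emptyFn_mem_BaseFns, rfl, fun _ => hS.choose,
      fun _ => hS.choose_spec, mem_univ _, fun i => i.elim0⟩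
  | succ N IH =>
    intro x hx
    obtain ⟨G₁, hG₁, e₁, u₁, hu₁, hU₁, hval₁⟩ := IH (x ∘ Fin.castSucc) (fun i => hx _)
    obtain ⟨F, hF, eF, t, ht, htU, hvF⟩ := hx (Fin.last N)
    have e : (Fn.pair G₁ F).m = N + 1 := by
      show G₁.m + F.m = N + 1
      rw [e₁, eF]
    refine ⟨Fn.pair G₁ F, pair_mem_FF hG₁ hF, e, Fin.append u₁ t, append_mem hu₁ ht,
      ⟨?_, ?_⟩, ?_⟩
    · show (Fin.append u₁ t) ∘ Fin.castAdd F.k ∈ G₁.U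
      rw [append_restrict_left]
      exact hU₁
    · show (Fin.append u₁ t) ∘ Fin.natAdd G₁.k ∈ F.U
      rw [append_restrict_right]
      exact htU
    · intro i
      show Fin.append (G₁.f ((Fin.append u₁ t) ∘ Fin.castAdd F.k))
        (F.f ((Fin.append u₁ t) ∘ Fin.natAdd G₁.k)) (Fin.cast e.symm i) = x i
      rw [append_restrict_left, append_restrict_right, append_val]
      by_cases hi : (i : ℕ) < N
      · rw [dif_pos (by show (i : ℕ) < G₁.m; omega)]
        have h3 := hval₁ ⟨(i : ℕ), hi⟩
        simp only [Function.comp_apply] at h3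
        rw [show x i = x (Fin.castSucc ⟨(i : ℕ), hi⟩) from congrArg x (Fin.ext rfl), ← h3]
        exact congrArg (G₁.f u₁) (Fin.ext rfl)
      · rw [dif_neg (by show ¬ (i : ℕ) < G₁.m; omega)]
        have hiN : (i : ℕ) = N := by omega
        have hidx : x (Fin.last N) = x i := congrArg x (Fin.ext (by simp [hiN]))
        rw [← hidx, ← hvF]
        exact congrArg (F.f t) (Fin.ext (by simp [hiN, e₁]; exact Nat.sub_eq_zero_of_le (le_of_eq hiN)))

/-- `RSub S` is really closed. -/
lemma isReallyClosed_RSub {S : Set ℝ} (hS : S.Nonempty) : IsReallyClosed (RSub S hS) := by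
  intro n hn a b ha hb ha0 hbne x hx hsum
  set Fc : Subfield ℝ := Subfield.closure (Set.range a ∪ Set.range b) with hFc
  have hFcR : (Fc : Set ℝ) ⊆ RSet S := by
    have h1 : Fc ≤ RSub S hS := by
      rw [hFc, Subfield.closure_le]
      rintro z (⟨i, rfl⟩ | ⟨i, rfl⟩)
      · exact ha i
      · exact hb i
    exact h1
  have hbinj : Function.Injective b := by
    intro i j h
    by_contra hij
    exact hbne i j hij h
  obtain ⟨m, a', b', ha', hb', ha'0, hb'inj, hsum', hder'⟩ :=
    reduction Fc n hn a b (fun i => Subfield.subset_closure (Or.inl ⟨i, rfl⟩))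
      (fun i => Subfield.subset_closure (Or.inr ⟨i, rfl⟩)) ha0 hbinj x hx hsum
  set v : Fin (m + m) → ℝ := Fin.append a' b' with hv
  have hPv : P v x = 0 := by
    rw [P, hv, pa_append, pb_append]
    exact hsum'
  have hDPv : DP v x ≠ 0 := by
    rw [DP, hv, pa_append, pb_append]
    exact hder'
  obtain ⟨q, r, hq0, hqx, hxr, huniq⟩ := isolate hx hPv hDPv
  have hvroot : v ∈ rootSet m (q:ℝ) (r:ℝ) := by
    refine ⟨?_, ?_, x, ⟨hqx, hxr⟩, hPv, hDPv, huniq⟩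
    · intro i
      rw [show pa v = a' from hv ▸ pa_append a' b']
      exact ha'0 i
    · rw [show pb v = b' from hv ▸ pb_append a' b']
      exact hb'inj
  have hxroot : theRoot m (q:ℝ) (r:ℝ) v = x := by
    obtain ⟨hI, hP, -, -⟩ := theRoot_spec hvroot
    exact huniq _ ⟨hI.1.le, hI.2.le⟩ hP
  have hvmem : ∀ j, v j ∈ RSet S := by
    intro j
    rw [hv, append_val]
    split_ifs
    · exact hFcR (ha' _)
    · exact hFcR (hb' _)
  obtain ⟨G, hG, e, u, hu, huU, hval⟩ := tupling hS (m + m) v hvmem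
  have e' : G.m = (rootFn m q r).k := e
  have hinner : (fun i => G.f u (Fin.cast e'.symm i)) = v := funext fun i => hval i
  refine ⟨Fn.comp (rootFn m q r) G e',
    comp_mem_FF (base_mem_FF (Or.inr ⟨(m, q, r), rfl⟩)) hG e', rfl, u, hu, ⟨huU, ?_⟩, ?_⟩
  · show (fun i => G.f u (Fin.cast e'.symm i)) ∈ (rootFn m q r).U
    rw [hinner]
    show v ∈ (if (0:ℝ) < (q:ℝ) then rootSet m (q:ℝ) (r:ℝ) else ∅)
    rw [if_pos hq0]
    exact hvroot
  · exact (congrArg (theRoot m (q:ℝ) (r:ℝ)) hinner).trans hxroot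

lemma Uempty_of_k_zero : ∀ N, ∀ F ∈ Stage N, F.k = 0 → F.U = ∅ := by
  intro N
  induction N with
  | zero =>
    rintro F (((rfl | rfl | rfl | rfl | rfl | rfl) | ⟨q, rfl⟩) | ⟨⟨n, q, r⟩, rfl⟩) hk
    · exact absurd hk one_ne_zero
    · exact absurd hk two_ne_zero
    · exact absurd hk two_ne_zero
    · exact absurd hk one_ne_zero
    · exact absurd hk one_ne_zero
    · exact absurd hk one_ne_zero
    · exact absurd hk one_ne_zero
    · have hn : n = 0 := by
        have : n + n = 0 := hk
        omega
      subst hn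
      show (if (0:ℝ) < (q:ℝ) then rootSet 0 (q:ℝ) (r:ℝ) else ∅) = ∅
      split_ifs
      · exact rootSet_zero_empty _ _
      · rfl
  | succ N IH =>
    rintro F ((hF | ⟨g, hg, h, hh, e, rfl⟩) | ⟨g, hg, h, hh, rfl⟩) hk
    · exact IH F hF hk
    · have h1 : h.U = ∅ := IH h hh hk
      show h.U ∩ _ = ∅
      rw [h1, empty_inter]
    · have hg0 : g.k = 0 := by
        have : g.k + h.k = 0 := hk
        omega
      have h1 : g.U = ∅ := IH g hg hg0
      show (fun s => s ∘ Fin.castAdd h.k) ⁻¹' g.U ∩ _ = ∅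
      rw [h1, Set.preimage_empty, empty_inter]

end Semantics

/-- There is a countable family `𝓕` of `C¹` functions, each defined on an open subset of
some `ℝᵏ` (`k ≥ 1`) with values in `ℝ`, such that for every nonempty `S ⊆ ℝ` the really
closure of `S` consists exactly of the values `f(s₀, …, s_{k-1})` for `f ∈ 𝓕` and tuples
of elements of `S` lying in the domain of `f`. -/
theorem exists_countable_C1_family_generating_really_closure :
    ∃ (k : ℕ → ℕ) (U : ∀ j, Set (Fin (k j) → ℝ)) (f : ∀ j, (Fin (k j) → ℝ) → ℝ),
      (∀ j, 1 ≤ k j) ∧ (∀ j, IsOpen (U j)) ∧ (∀ j, ContDiffOn ℝ 1 (f j) (U j)) ∧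
      ∀ S : Set ℝ, S.Nonempty →
        (reallyClosure S : Set ℝ) =
          {x : ℝ | ∃ j, ∃ s : Fin (k j) → ℝ, (∀ i, s i ∈ S) ∧ s ∈ U j ∧ f j s = x} := by
  classical
  set Good : Set Fn := {F | F ∈ FF ∧ F.m = 1 ∧ 1 ≤ F.k} with hGood
  have hGoodc : Good.Countable := countable_FF.mono fun F hF => hF.1
  have hGoodne : Good.Nonempty := ⟨varFn, base_mem_FF varFn_mem_BaseFns, rfl, le_refl 1⟩
  obtain ⟨φ, hφ⟩ := hGoodc.exists_eq_range hGoodne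
  have hmem : ∀ j, φ j ∈ Good := fun j => by rw [hφ]; exact Set.mem_range_self j
  have hm1 : ∀ j, (φ j).m = 1 := fun j => (hmem j).2.1
  refine ⟨fun j => (φ j).k, fun j => (φ j).U, fun j s => (φ j).f s (Fin.cast (hm1 j).symm 0),
    fun j => (hmem j).2.2, fun j => (φ j).hU, fun j => contDiffOn_pi.1 (φ j).hf _,
    fun S hS => ?_⟩
  ext x
  simp only [SetLike.mem_coe, mem_setOf_eq]
  constructor
  · intro hx
    have hle : reallyClosure S ≤ RSub S hS :=
      reallyClosure_le (isReallyClosed_RSub hS) fun z hz => var_mem_RSet hz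
    obtain ⟨F, hF, e, s, hsS, hsU, hval⟩ := hle hx
    have hFk : 1 ≤ F.k := by
      by_contra hc
      have hk0 : F.k = 0 := by omega
      obtain ⟨N, hN⟩ := mem_FF_iff.1 hF
      have := Uempty_of_k_zero N F hN hk0
      rw [this] at hsU
      exact notMem_empty _ hsU
    have hFGood : F ∈ Good := ⟨hF, e, hFk⟩
    rw [hφ] at hFGood
    obtain ⟨j, hj⟩ := hFGood
    subst hj
    exact ⟨j, s, hsS, hsU, hval⟩
  · rintro ⟨j, s, hsS, hsU, rfl⟩
    obtain ⟨N, hN⟩ := mem_FF_iff.1 (hmem j).1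
    exact stageA S N _ hN s hsU (fun i => subset_reallyClosure S (hsS i)) _
end

section
/- Let n < m be natural numbers, U an open subset of ℝⁿ, and F : U → ℝᵐ a continuously differentiable (C¹) function. Then the image F[U] has Lebesgue measure 0 in ℝᵐ. -/
open MeasureTheory Module

/-!
Pick an injective linear map `ι : ℝⁿ → ℝᵐ` with a linear left inverse `π`. Then
`F '' U = (F ∘ π) '' (ι '' U)`, where `ι '' U` lies in the proper subspace `range ι` and is
therefore Lebesgue-null, and `F ∘ π` is differentiable on it. Differentiable maps between spaces
of the same dimension send null sets to null sets.
-/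

section

variable {E F : Type*} [NormedAddCommGroup E] [NormedSpace ℝ E] [FiniteDimensional ℝ E]
  [NormedAddCommGroup F] [NormedSpace ℝ F] [FiniteDimensional ℝ F]
  [MeasurableSpace F] [BorelSpace F] (μ : Measure F) [μ.IsAddHaarMeasure]

theorem addHaar_range_eq_zero_of_finrank_lt (L : E →ₗ[ℝ] F) (h : finrank ℝ E < finrank ℝ F) :
    μ (LinearMap.range L) = 0 :=
  Measure.addHaar_submodule μ _ fun htop =>
    h.not_ge (LinearMap.finrank_le_finrank_of_surjective (LinearMap.range_eq_top.mp htop))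

theorem addHaar_image_eq_zero_of_differentiableOn_of_finrank_lt {f : E → F} {s : Set E}
    (hf : DifferentiableOn ℝ f s) (h : finrank ℝ E < finrank ℝ F) : μ (f '' s) = 0 := by
  obtain ⟨ι, hι⟩ := finrank_le_iff_exists_linearMap.mp h.le
  obtain ⟨π, hπι⟩ := ι.exists_leftInverse_of_injective (LinearMap.ker_eq_bot.mpr hι)
  have hπ : ∀ x, π (ι x) = x := LinearMap.congr_fun hπι
  have himage : f '' s = (f ∘ π) '' (ι '' s) := by
    rw [Set.image_image]
    exact Set.image_congr fun x _ => by simp [hπ]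
  have hnull : μ (ι '' s) = 0 :=
    measure_mono_null (Set.image_subset_range _ _) (addHaar_range_eq_zero_of_finrank_lt μ ι h)
  have hdiff : DifferentiableOn ℝ (f ∘ π) (ι '' s) :=
    hf.comp (LinearMap.toContinuousLinearMap π).differentiableOn
      (by rintro _ ⟨x, hx, rfl⟩; simpa [hπ] using hx)
  rw [himage]
  exact addHaar_image_eq_zero_of_differentiableOn_of_addHaar_eq_zero μ hdiff hnull

end

theorem measure_image_eq_zero_of_contDiffOn_of_lt_general
    (n m : ℕ) (hnm : n < m) (U : Set (Fin n → ℝ))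
    (F : (Fin n → ℝ) → (Fin m → ℝ)) (hF : ContDiffOn ℝ 1 F U) :
    volume (F '' U) = 0 :=
  addHaar_image_eq_zero_of_differentiableOn_of_finrank_lt volume
    (hF.differentiableOn one_ne_zero) (by simpa using hnm)

/-- If `n < m`, `U ⊆ ℝⁿ` is open and `F : U → ℝᵐ` is `C¹`, then the image `F[U]`
has Lebesgue measure zero in `ℝᵐ`. -/
theorem measure_image_eq_zero_of_contDiffOn_of_lt
    (n m : ℕ) (hnm : n < m) (U : Set (Fin n → ℝ)) (hU : IsOpen U)
    (F : (Fin n → ℝ) → (Fin m → ℝ)) (hF : ContDiffOn ℝ 1 F U) :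
    volume (F '' U) = 0 :=
  measure_image_eq_zero_of_contDiffOn_of_lt_general n m hnm U F hF
end

section
/- Multiplication is not similar to addition on a perfect rectangle: there do not exist non-empty perfect sets P₀, P₁ ⊆ ℝ and continuous injections φ₀ : P₀ → ℝ, φ₁ : P₁ → ℝ such that x + y = φ₀(x) · φ₁(y) for all x ∈ P₀ and y ∈ P₁. -/
/-! A function of the form `(x, y) ↦ φ₀ x * φ₁ y` has "rank one": on every 2 × 2 subrectangle
`{x₀, x₁} × {y₀, y₁}` the products of its diagonal and antidiagonal values agree. For `x + y`
this identity reduces to `(x₀ - x₁) * (y₁ - y₀) = 0`, and a nonempty perfect set contains two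
distinct points. -/

theorem Preperfect.nontrivial_of_nonempty {α : Type*} [TopologicalSpace α] {C : Set α}
    (hC : Preperfect C) (hne : C.Nonempty) : C.Nontrivial := by
  obtain ⟨x, hx⟩ := hne
  obtain ⟨y, ⟨-, hy⟩, hyx⟩ := preperfect_iff_nhds.mp hC x hx Set.univ Filter.univ_mem
  exact ⟨x, hx, y, hy, hyx.symm⟩

theorem eq_or_eq_of_add_mul_add_eq_add_mul_add {R : Type*} [CommRing R] [NoZeroDivisors R]
    {a b c d : R} (h : (a + c) * (b + d) = (a + d) * (b + c)) : a = b ∨ c = d := by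
  have hprod : (a - b) * (d - c) = 0 := by linear_combination h
  rcases mul_eq_zero.mp hprod with hab | hcd
  · exact Or.inl (sub_eq_zero.mp hab)
  · exact Or.inr (sub_eq_zero.mp hcd).symm

/-- Multiplication is not similar to addition on a perfect rectangle: there are no
nonempty perfect sets `P₀, P₁ ⊆ ℝ` and continuous injections `φ₀ : P₀ → ℝ`,
`φ₁ : P₁ → ℝ` with `x + y = φ₀ x * φ₁ y` for all `x ∈ P₀` and `y ∈ P₁`. -/
theorem mul_not_similar_to_add_on_perfect_rectangle :
    ¬ ∃ (P₀ P₁ : Set ℝ) (φ₀ φ₁ : ℝ → ℝ),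
      Perfect P₀ ∧ P₀.Nonempty ∧ Perfect P₁ ∧ P₁.Nonempty ∧
      ContinuousOn φ₀ P₀ ∧ Set.InjOn φ₀ P₀ ∧
      ContinuousOn φ₁ P₁ ∧ Set.InjOn φ₁ P₁ ∧
      ∀ x ∈ P₀, ∀ y ∈ P₁, x + y = φ₀ x * φ₁ y := by
  rintro ⟨P₀, P₁, φ₀, φ₁, hP₀, hne₀, hP₁, hne₁, -, -, -, -, h⟩
  obtain ⟨x₀, hx₀, x₁, hx₁, hx⟩ := hP₀.acc.nontrivial_of_nonempty hne₀
  obtain ⟨y₀, hy₀, y₁, hy₁, hy⟩ := hP₁.acc.nontrivial_of_nonempty hne₁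
  have rank_one : (x₀ + y₀) * (x₁ + y₁) = (x₀ + y₁) * (x₁ + y₀) := by
    rw [h x₀ hx₀ y₀ hy₀, h x₁ hx₁ y₁ hy₁, h x₀ hx₀ y₁ hy₁, h x₁ hx₁ y₀ hy₀]
    ring
  exact (eq_or_eq_of_add_mul_add_eq_add_mul_add rank_one).elim hx hy
end

section
/- Let n ≥ 2, k ≥ 1, let m be a natural number satisfying Σ_{a ⊊ n} k · m^{|a|} < mⁿ (where a ranges over proper subsets of {0, …, n−1}), let U_a ⊆ ℝᵏ be open for each proper subset a of {0, …, n−1}, and let f : Π_{a ⊊ n} U_a → ℝ be continuously differentiable. Define F : Π_{a ⊊ n} (U_a)^{(m^{|a|})} → ℝ^{(mⁿ)} by F(⟨x_{a,e} : e ∈ m^{|a|}, a ⊊ n⟩)_h = f(⟨x_{a, h↾a} : a ⊊ n⟩), where the coordinates of ℝ^{(mⁿ)} are indexed by functions h : {0, …, n−1} → {0, …, m−1} and h↾a denotes the restriction of h to a. Then the image of F has Lebesgue measure 0 in ℝ^{(mⁿ)}. -/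
/-!
The map `F` factors through the finite-dimensional space `Π_{a ⊊ n} (ℝᵏ)^{m^{|a|}}`, of
dimension `∑_{a ⊊ n} k · m^{|a|}`, and is `C¹` on an open subset of it, hence locally Lipschitz.
Locally Lipschitz maps do not increase Hausdorff dimension, so the image has Hausdorff dimension
less than `mⁿ`; its `mⁿ`-dimensional Hausdorff measure, which is Lebesgue measure on `ℝ^{mⁿ}`,
therefore vanishes.
-/

open MeasureTheory Module
open scoped NNReal

section HausdorffDimension

variable {E F : Type*} [NormedAddCommGroup E] [NormedSpace ℝ E] [FiniteDimensional ℝ E]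
  [NormedAddCommGroup F] [NormedSpace ℝ F]

theorem ContDiffOn.dimH_image_le_of_isOpen {f : E → F} {s : Set E} (hf : ContDiffOn ℝ 1 f s)
    (hs : IsOpen s) : dimH (f '' s) ≤ dimH s :=
  dimH_image_le_of_locally_lipschitzOn fun x hx =>
    let ⟨C, t, ht, hC⟩ := ((hf x hx).contDiffAt (hs.mem_nhds hx)).exists_lipschitzOnWith
    ⟨C, t, nhdsWithin_le_nhds ht, hC⟩

theorem ContDiffOn.volume_image_eq_zero_of_finrank_lt {ι : Type*} [Fintype ι] {f : E → ι → ℝ}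
    {s : Set E} (hf : ContDiffOn ℝ 1 f s) (hs : IsOpen s) (hdim : finrank ℝ E < Fintype.card ι) :
    volume (f '' s) = 0 := by
  have hlt : dimH (f '' s) < ((Fintype.card ι : ℝ≥0) : ENNReal) :=
    calc dimH (f '' s) ≤ dimH s := hf.dimH_image_le_of_isOpen hs
      _ ≤ dimH (Set.univ : Set E) := dimH_mono (Set.subset_univ s)
      _ = finrank ℝ E := Real.dimH_univ_eq_finrank E
      _ < _ := mod_cast hdim
  rw [← hausdorffMeasure_pi_real]
  exact_mod_cast hausdorffMeasure_of_dimH_lt hlt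

end HausdorffDimension

theorem isOpen_setOf_forall_forall_mem {ι X : Type*} [Finite ι] {κ : ι → Type*}
    [∀ i, Finite (κ i)] [TopologicalSpace X] {U : ι → Set X} (hU : ∀ i, IsOpen (U i)) :
    IsOpen {x : ∀ i, κ i → X | ∀ i j, x i j ∈ U i} := by
  simp only [Set.ofPred_forall]
  exact isOpen_iInter_of_finite fun i => isOpen_iInter_of_finite fun j =>
    (hU i).preimage ((continuous_apply j).comp (continuous_apply i))

theorem finrank_pi_finset_subtype_fun {K α β V : Type*} [DivisionRing K] [Fintype α]
    [DecidableEq α] [Fintype β] [AddCommGroup V] [Module K V] [FiniteDimensional K V]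
    (p : Finset α → Prop) [DecidablePred p] :
    finrank K (∀ a : {a : Finset α // p a}, (a.1 → β) → V) =
      ∑ a ∈ Finset.univ.filter p, finrank K V * Fintype.card β ^ a.card := by
  rw [finrank_pi_fintype, Finset.sum_subtype (p := p) _ (by simp)
    (fun a : Finset α => finrank K V * Fintype.card β ^ a.card)]
  refine Finset.sum_congr rfl fun a _ => ?_
  simp [finrank_pi_fintype, mul_comm]

theorem measure_image_multigrid_map_eq_zero_general
    (n k m : ℕ)
    (hm : (∑ a ∈ Finset.univ.filter (fun a : Finset (Fin n) => a ≠ Finset.univ),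
        k * m ^ a.card) < m ^ n)
    (U : {a : Finset (Fin n) // a ≠ Finset.univ} → Set (Fin k → ℝ))
    (hU : ∀ a, IsOpen (U a))
    (f : ({a : Finset (Fin n) // a ≠ Finset.univ} → (Fin k → ℝ)) → ℝ)
    (hf : ContDiffOn ℝ 1 f {x | ∀ a, x a ∈ U a}) :
    volume ((fun (x : ∀ a : {a : Finset (Fin n) // a ≠ Finset.univ},
          (↥a.1 → Fin m) → (Fin k → ℝ)) =>
        fun h : Fin n → Fin m => f (fun a => x a (fun i => h ↑i))) ''
      {x | ∀ a e, x a e ∈ U a}) = 0 := by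
  refine ContDiffOn.volume_image_eq_zero_of_finrank_lt ?_ ?_ ?_
  · refine contDiffOn_pi.2 fun h => hf.comp ?_ fun x hx a => hx a _
    exact (contDiff_pi.2 fun a => contDiff_pi.1 (contDiff_pi.1 contDiff_id a) _).contDiffOn
  · exact isOpen_setOf_forall_forall_mem hU
  · simpa [finrank_pi_finset_subtype_fun] using hm

/-- Let `n ≥ 2`, `k ≥ 1` and `m` with `∑_{a ⊊ n} k · m^{|a|} < mⁿ`. Let `U a ⊆ ℝᵏ` be
open for each proper subset `a` of `{0, …, n-1}` and let `f : Π_{a ⊊ n} U a → ℝ` be `C¹`.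
Then the map `F : Π_{a ⊊ n} (U a)^{m^{|a|}} → ℝ^{mⁿ}` given by
`F(⟨x_{a,e}⟩)_h = f(⟨x_{a, h↾a}⟩)` (coordinates of `ℝ^{mⁿ}` indexed by `h : n → m`)
has image of Lebesgue measure zero. -/
theorem measure_image_multigrid_map_eq_zero
    (n k m : ℕ) (hn : 2 ≤ n) (hk : 1 ≤ k)
    (hm : (∑ a ∈ Finset.univ.filter (fun a : Finset (Fin n) => a ≠ Finset.univ),
        k * m ^ a.card) < m ^ n)
    (U : {a : Finset (Fin n) // a ≠ Finset.univ} → Set (Fin k → ℝ))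
    (hU : ∀ a, IsOpen (U a))
    (f : ({a : Finset (Fin n) // a ≠ Finset.univ} → (Fin k → ℝ)) → ℝ)
    (hf : ContDiffOn ℝ 1 f {x | ∀ a, x a ∈ U a}) :
    volume ((fun (x : ∀ a : {a : Finset (Fin n) // a ≠ Finset.univ},
          (↥a.1 → Fin m) → (Fin k → ℝ)) =>
        fun h : Fin n → Fin m => f (fun a => x a (fun i => h ↑i))) ''
      {x | ∀ a e, x a e ∈ U a}) = 0 :=
  measure_image_multigrid_map_eq_zero_general n k m hm U hU f hf
end
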